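/- Let 1 ≤ p < ∞, 0 < λ < n, and let T be an operator satisfying the pointwise bound |Tf_i(x)| ≤ C (2^i r)^{-n/p} (∫_{B(x₀,2^{i+1}r)} |f|^p)^{1/p} for x ∈ B(x₀,r) whenever f_i is supported in B(x₀,2^{i+1}r) \ B(x₀,2^i r), and suppose T is bounded on L^p(ℝⁿ). Then T is bounded on the Morrey space L^{p,λ}(ℝⁿ): ‖Tf‖_{L^{p,λ}} ≤ C' ‖f‖_{L^{p,λ}}. -/

import Mathlib

open MeasureTheory Metric Real ENNReal

/-- The classical Morrey norm `‖f‖_{L^{p,λ}(ℝⁿ)} =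
(sup_{B(x₀,r)} r^{-λ} ∫_{B(x₀,r)} |f|^p)^{1/p}`. -/
noncomputable def morreyNorm {n : ℕ} (p lam : ℝ)
    (f : EuclideanSpace ℝ (Fin n) → ℝ) : ℝ≥0∞ :=
  ⨆ (x₀ : EuclideanSpace ℝ (Fin n)) (r : {r : ℝ // 0 < r}),
    (ENNReal.ofReal (r.1 ^ (-lam)) *
      ∫⁻ y in ball x₀ r.1, ENNReal.ofReal (|f y| ^ p)) ^ (1 / p)


private lemma ennreal_iSup_rpow {c : ℝ} (hc : 0 < c) {ι : Sort*} (f : ι → ℝ≥0∞) :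
    (⨆ i, f i) ^ c = ⨆ i, (f i) ^ c := by
  have := (ENNReal.orderIsoRpow c hc).map_iSup f
  simpa only [ENNReal.orderIsoRpow_apply] using this

private lemma ennreal_add_rpow_le {p : ℝ} (hp : 0 ≤ p) (a b : ℝ≥0∞) :
    (a + b) ^ p ≤ 2 ^ p * (a ^ p + b ^ p) := by
  have h1 : a + b ≤ 2 * (a ⊔ b) := by
    rw [two_mul]; exact add_le_add le_sup_left le_sup_right
  calc (a + b) ^ p ≤ (2 * (a ⊔ b)) ^ p := ENNReal.rpow_le_rpow h1 hp
    _ = 2 ^ p * (a ⊔ b) ^ p := ENNReal.mul_rpow_of_nonneg _ _ hp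
    _ ≤ 2 ^ p * (a ^ p + b ^ p) := by
        gcongr
        rcases le_total a b with h | h
        · rw [sup_of_le_right h]; exact le_add_self
        · rw [sup_of_le_left h]; exact le_self_add

private lemma real_offdiag_const (C lam p : ℝ) (n : ℕ) (r : ℝ) (hr : 0 < r) (i : ℕ) :
    C * ((2:ℝ) ^ i * r) ^ (-(n:ℝ) / p) * ((2:ℝ) ^ (i+1) * r) ^ (lam / p)
      = (C * 2 ^ (lam / p) * r ^ ((lam - n) / p)) * ((2:ℝ) ^ ((lam - n)/p)) ^ i := by
  have h2i : (0:ℝ) < 2 ^ i := by positivity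
  have e1 : ((2:ℝ) ^ i * r) ^ (-(n:ℝ) / p)
      = (2:ℝ) ^ ((i:ℝ) * (-(n:ℝ) / p)) * r ^ (-(n:ℝ) / p) := by
    rw [Real.mul_rpow h2i.le hr.le, ← Real.rpow_natCast 2 i, ← Real.rpow_mul (by norm_num)]
  have e2 : ((2:ℝ) ^ (i+1) * r) ^ (lam / p)
      = (2:ℝ) ^ (((i:ℝ)+1) * (lam / p)) * r ^ (lam / p) := by
    rw [Real.mul_rpow (by positivity) hr.le, ← Real.rpow_natCast 2 (i+1),
      ← Real.rpow_mul (by norm_num)]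
    push_cast
    ring_nf
  have e3 : ((2:ℝ) ^ ((lam - n)/p)) ^ i = (2:ℝ) ^ ((i:ℝ) * ((lam - n)/p)) := by
    rw [← Real.rpow_natCast ((2:ℝ) ^ ((lam - n)/p)) i, ← Real.rpow_mul (by norm_num), mul_comm]
  rw [e1, e2, e3]
  rw [show C * ((2:ℝ) ^ ((i:ℝ) * (-(n:ℝ) / p)) * r ^ (-(n:ℝ) / p)) *
      ((2:ℝ) ^ (((i:ℝ)+1) * (lam / p)) * r ^ (lam / p))
      = C * ((2:ℝ) ^ ((i:ℝ) * (-(n:ℝ) / p)) * (2:ℝ) ^ (((i:ℝ)+1) * (lam / p))) *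
        (r ^ (-(n:ℝ) / p) * r ^ (lam / p)) from by ring]
  rw [← Real.rpow_add (by norm_num : (0:ℝ) < 2), ← Real.rpow_add hr]
  rw [show (i:ℝ) * (-(n:ℝ) / p) + ((i:ℝ)+1) * (lam / p)
      = lam / p + (i:ℝ) * ((lam - n)/p) from by ring,
    show -(n:ℝ) / p + lam / p = (lam - n)/p from by ring]
  rw [Real.rpow_add (by norm_num : (0:ℝ) < 2)]
  ring

/-- Transference of `L^p` boundedness to Morrey boundedness: if a (countably subadditive)
operator `T` is bounded on `L^p(ℝⁿ)` and satisfies the off-diagonal bound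
`|Tf_i(x)| ≤ C (2^i r)^{-n/p} (∫_{B(x₀,2^{i+1}r)} |f_i|^p)^{1/p}` for `x ∈ B(x₀,r)` whenever
`f_i` is supported in the annulus `B(x₀,2^{i+1}r) \ B(x₀,2^i r)`, then `T` is bounded on the
Morrey space `L^{p,λ}(ℝⁿ)`, `0 < λ < n`. -/
theorem morrey_transference (n : ℕ) (hn : 1 ≤ n) (p lam : ℝ) (hp : 1 ≤ p)
    (hlam0 : 0 < lam) (hlamn : lam < n)
    (T : (EuclideanSpace ℝ (Fin n) → ℝ) → EuclideanSpace ℝ (Fin n) → ℝ)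
    (C : ℝ) (hC : 0 < C)
    (hTLp : ∀ f : EuclideanSpace ℝ (Fin n) → ℝ,
      (∫⁻ x, ENNReal.ofReal (|T f x| ^ p)) ≤
        ENNReal.ofReal C * ∫⁻ x, ENNReal.ofReal (|f x| ^ p))
    (hTsub : ∀ (g : ℕ → EuclideanSpace ℝ (Fin n) → ℝ) (f : EuclideanSpace ℝ (Fin n) → ℝ),
      (∀ x, HasSum (fun i => g i x) (f x)) →
      ∀ x, ENNReal.ofReal |T f x| ≤ ∑' i, ENNReal.ofReal |T (g i) x|)
    (hToff : ∀ (x₀ : EuclideanSpace ℝ (Fin n)) (r : ℝ), 0 < r → ∀ i : ℕ, 1 ≤ i →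
      ∀ f : EuclideanSpace ℝ (Fin n) → ℝ,
        (∀ y, y ∉ ball x₀ (2 ^ (i + 1) * r) \ ball x₀ (2 ^ i * r) → f y = 0) →
        ∀ x ∈ ball x₀ r,
          ENNReal.ofReal |T f x| ≤
            ENNReal.ofReal (C * ((2 : ℝ) ^ i * r) ^ (-(n : ℝ) / p)) *
              (∫⁻ y in ball x₀ (2 ^ (i + 1) * r), ENNReal.ofReal (|f y| ^ p)) ^ (1 / p)) :
    ∃ C' > 0, ∀ f : EuclideanSpace ℝ (Fin n) → ℝ,
      morreyNorm p lam (T f) ≤ ENNReal.ofReal C' * morreyNorm p lam f := by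
  classical
  have hp0 : (0:ℝ) < p := lt_of_lt_of_le one_pos hp
  have hip : (0:ℝ) < 1 / p := by positivity
  -- the p-th power Morrey functional
  set Mp : (EuclideanSpace ℝ (Fin n) → ℝ) → ℝ≥0∞ := fun f =>
    ⨆ (x₀ : EuclideanSpace ℝ (Fin n)) (r : {r : ℝ // 0 < r}),
      ENNReal.ofReal (r.1 ^ (-lam)) * ∫⁻ y in ball x₀ r.1, ENNReal.ofReal (|f y| ^ p)
    with hMp
  have hMorrey : ∀ f, morreyNorm p lam f = (Mp f) ^ (1 / p) := by
    intro f
    rw [morreyNorm, hMp, ennreal_iSup_rpow hip]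
    exact iSup_congr fun x₀ => (ennreal_iSup_rpow hip _).symm
  have hball : ∀ (f : EuclideanSpace ℝ (Fin n) → ℝ) (x : EuclideanSpace ℝ (Fin n)) (ρ : ℝ),
      0 < ρ → (∫⁻ y in ball x ρ, ENNReal.ofReal (|f y| ^ p))
        ≤ ENNReal.ofReal (ρ ^ lam) * Mp f := by
    intro f x ρ hρ
    have h1 : ENNReal.ofReal (ρ ^ (-lam)) * ∫⁻ y in ball x ρ, ENNReal.ofReal (|f y| ^ p)
        ≤ Mp f := le_iSup_of_le x (le_iSup_of_le ⟨ρ, hρ⟩ le_rfl)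
    calc (∫⁻ y in ball x ρ, ENNReal.ofReal (|f y| ^ p))
        = ENNReal.ofReal (ρ ^ lam) *
          (ENNReal.ofReal (ρ ^ (-lam)) * ∫⁻ y in ball x ρ, ENNReal.ofReal (|f y| ^ p)) := by
          rw [← mul_assoc, ← ENNReal.ofReal_mul (by positivity), ← Real.rpow_add hρ,
            add_neg_cancel, Real.rpow_zero, ENNReal.ofReal_one, one_mul]
      _ ≤ ENNReal.ofReal (ρ ^ lam) * Mp f := by gcongr
  -- geometric constants
  set t : ℝ := 2 ^ ((lam - n) / p) with ht
  have ht0 : 0 < t := Real.rpow_pos_of_pos two_pos _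
  have ht1 : t < 1 := Real.rpow_lt_one_of_one_lt_of_neg one_lt_two
    (div_neg_of_neg_of_pos (sub_neg.2 hlamn) hp0)
  set q : ℝ≥0∞ := ENNReal.ofReal t with hqdef
  have hq1 : q < 1 := ENNReal.ofReal_lt_one.2 ht1
  set Gq : ℝ≥0∞ := q * (1 - q)⁻¹ with hGqdef
  have hGq : Gq ≠ ⊤ := by
    apply ENNReal.mul_ne_top ENNReal.ofReal_ne_top
    rw [ENNReal.inv_ne_top]
    exact (tsub_pos_of_lt hq1).ne'
  set V : ℝ≥0∞ := volume (ball (0 : EuclideanSpace ℝ (Fin n)) 1) with hVdef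
  have hV : V ≠ ⊤ := measure_ball_lt_top.ne
  set D : ℝ≥0∞ := 2 ^ p * (ENNReal.ofReal (2 ^ lam * C) +
      ENNReal.ofReal ((C * 2 ^ (lam / p)) ^ p) * Gq ^ p * V) with hDdef
  have hDtop : D ≠ ⊤ := by
    apply ENNReal.mul_ne_top (ENNReal.rpow_ne_top_of_nonneg hp0.le ENNReal.ofNat_ne_top)
    refine ENNReal.add_ne_top.2 ⟨ENNReal.ofReal_ne_top, ?_⟩
    exact ENNReal.mul_ne_top (ENNReal.mul_ne_top ENNReal.ofReal_ne_top
      (ENNReal.rpow_ne_top_of_nonneg hp0.le hGq)) hV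
  have hDle : D ≤ ENNReal.ofReal (max 1 D.toReal) := by
    calc D = ENNReal.ofReal D.toReal := (ENNReal.ofReal_toReal hDtop).symm
      _ ≤ _ := ENNReal.ofReal_le_ofReal (le_max_right _ _)
  refine ⟨(max 1 D.toReal) ^ (1 / p),
    Real.rpow_pos_of_pos (lt_of_lt_of_le one_pos (le_max_left _ _)) _, ?_⟩
  intro f
  rw [hMorrey f]
  -- the key per-ball estimate
  have key : ∀ (x₀ : EuclideanSpace ℝ (Fin n)) (r : ℝ), 0 < r →
      ENNReal.ofReal (r ^ (-lam)) * (∫⁻ x in ball x₀ r, ENNReal.ofReal (|T f x| ^ p))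
        ≤ D * Mp f := by
    intro x₀ r hr
    -- the decomposition
    set g : ℕ → EuclideanSpace ℝ (Fin n) → ℝ := fun i y =>
      if i = 0 then (if dist y x₀ < 2 * r then f y else 0)
      else (if 2 ^ i * r ≤ dist y x₀ ∧ dist y x₀ < 2 ^ (i + 1) * r then f y else 0) with hg
    have hsum : ∀ x, HasSum (fun i => g i x) (f x) := by
      intro x
      rcases lt_or_ge (dist x x₀) (2 * r) with hx | hx
      · have h0 : g 0 x = f x := by simp [hg, hx]
        have hz : ∀ i, i ≠ 0 → g i x = 0 := by
          intro i hi
          have hle : ¬ (2 ^ i * r ≤ dist x x₀) := by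
            push_neg
            calc dist x x₀ < 2 * r := hx
              _ ≤ 2 ^ i * r := by
                  apply mul_le_mul_of_nonneg_right _ hr.le
                  calc (2:ℝ) = 2 ^ 1 := (pow_one 2).symm
                    _ ≤ 2 ^ i := pow_le_pow_right₀ one_le_two (Nat.one_le_iff_ne_zero.2 hi)
          simp [hg, hi, hle]
        have h := hasSum_single (f := fun i => g i x) 0 (fun i hi => hz i hi)
        simpa only [h0] using h
      · have hex : ∃ m : ℕ, dist x x₀ < 2 ^ m * r := by
          obtain ⟨m, hm⟩ := pow_unbounded_of_one_lt (dist x x₀ / r) (one_lt_two (α := ℝ))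
          exact ⟨m, by rwa [div_lt_iff₀ hr] at hm⟩
        set k := Nat.find hex with hkdef
        have hk : dist x x₀ < 2 ^ k * r := Nat.find_spec hex
        have hmin : ∀ j, j < k → 2 ^ j * r ≤ dist x x₀ := fun j hj =>
          not_lt.1 (Nat.find_min hex hj)
        have hk2 : 2 ≤ k := by
          by_contra h
          push_neg at h
          have h2k : (2:ℝ) ^ k ≤ 2 := by
            interval_cases k <;> norm_num
          exact absurd (hk.trans_le (mul_le_mul_of_nonneg_right h2k hr.le)) (not_lt.2 hx)
        have h1 : g (k - 1) x = f x := by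
          have hc1 : 2 ^ (k - 1) * r ≤ dist x x₀ := hmin _ (by omega)
          have hc2 : dist x x₀ < 2 ^ ((k - 1) + 1) * r := by
            rwa [Nat.sub_add_cancel (by omega)]
          have hne : k - 1 ≠ 0 := by omega
          simp [hg, hne, hc1, hc2]
        have hz : ∀ i, i ≠ k - 1 → g i x = 0 := by
          intro i hi
          rcases Nat.eq_zero_or_pos i with rfl | hipos
          · have : ¬ dist x x₀ < 2 * r := not_lt.2 hx
            simp [hg, this]
          · have hne : i ≠ 0 := hipos.ne'
            have hcond : ¬ (2 ^ i * r ≤ dist x x₀ ∧ dist x x₀ < 2 ^ (i + 1) * r) := by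
              rintro ⟨hle, hlt⟩
              rcases lt_or_gt_of_ne hi with h | h
              · exact absurd hlt (not_lt.2 (hmin (i + 1) (by omega)))
              · have h2 : (2:ℝ) ^ k ≤ 2 ^ i :=
                  pow_le_pow_right₀ one_le_two (by omega)
                exact absurd (hk.trans_le (mul_le_mul_of_nonneg_right h2 hr.le))
                  (not_lt.2 hle)
            simp [hg, hne, hcond]
        have h := hasSum_single (f := fun i => g i x) (k - 1) (fun i hi => hz i hi)
        simpa only [h1] using h
    -- bound for the annular pieces
    have hstep : ∀ i : ℕ, 1 ≤ i → ∀ x ∈ ball x₀ r,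
        ENNReal.ofReal |T (g i) x| ≤
          ENNReal.ofReal (C * 2 ^ (lam / p) * r ^ ((lam - n) / p)) * q ^ i *
            (Mp f) ^ (1 / p) := by
      intro i hi x hx
      have hne : i ≠ 0 := by omega
      have hsupp : ∀ y, y ∉ ball x₀ (2 ^ (i + 1) * r) \ ball x₀ (2 ^ i * r) → g i y = 0 := by
        intro y hy
        by_cases hc : 2 ^ i * r ≤ dist y x₀ ∧ dist y x₀ < 2 ^ (i + 1) * r
        · exact absurd ⟨mem_ball.2 hc.2, fun hmem => absurd (mem_ball.1 hmem)
            (not_lt.2 hc.1)⟩ hy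
        · simp [hg, hne, hc]
      have h1 := hToff x₀ r hr i hi (g i) hsupp x hx
      have h2 : (∫⁻ y in ball x₀ (2 ^ (i + 1) * r), ENNReal.ofReal (|g i y| ^ p))
          ≤ ENNReal.ofReal ((2 ^ (i + 1) * r) ^ lam) * Mp f := by
        refine le_trans (lintegral_mono fun y => ?_) (hball f x₀ _ (by positivity))
        rw [hg]
        dsimp only
        rw [if_neg hne]
        split_ifs with hc
        · exact le_rfl
        · simp [Real.zero_rpow hp0.ne']
      calc ENNReal.ofReal |T (g i) x|
          ≤ ENNReal.ofReal (C * ((2 : ℝ) ^ i * r) ^ (-(n : ℝ) / p)) *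
            (ENNReal.ofReal ((2 ^ (i + 1) * r) ^ lam) * Mp f) ^ (1 / p) := by
            refine h1.trans ?_
            gcongr
        _ = ENNReal.ofReal (C * ((2 : ℝ) ^ i * r) ^ (-(n : ℝ) / p) *
              ((2 : ℝ) ^ (i + 1) * r) ^ (lam / p)) * (Mp f) ^ (1 / p) := by
            rw [ENNReal.mul_rpow_of_nonneg _ _ hip.le,
              ENNReal.ofReal_rpow_of_nonneg (by positivity) hip.le,
              ← Real.rpow_mul (by positivity), mul_one_div, ← mul_assoc,
              ← ENNReal.ofReal_mul (by positivity)]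
        _ = ENNReal.ofReal (C * 2 ^ (lam / p) * r ^ ((lam - n) / p)) * q ^ i *
              (Mp f) ^ (1 / p) := by
            rw [real_offdiag_const C lam p n r hr i,
              ENNReal.ofReal_mul (by positivity), ENNReal.ofReal_pow ht0.le]
    -- the series bound
    set K : ℝ≥0∞ := ENNReal.ofReal (C * 2 ^ (lam / p) * r ^ ((lam - n) / p)) *
      (Mp f) ^ (1 / p) * Gq with hKdef
    have hpt : ∀ x ∈ ball x₀ r,
        ENNReal.ofReal |T f x| ≤ ENNReal.ofReal |T (g 0) x| + K := by
      intro x hx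
      refine (hTsub g f hsum x).trans ?_
      rw [tsum_eq_zero_add' ENNReal.summable]
      refine add_le_add_right ?_ _
      calc (∑' i : ℕ, ENNReal.ofReal |T (g (i + 1)) x|)
          ≤ ∑' i : ℕ, ENNReal.ofReal (C * 2 ^ (lam / p) * r ^ ((lam - n) / p)) *
              q ^ (i + 1) * (Mp f) ^ (1 / p) :=
            ENNReal.tsum_le_tsum fun i => hstep (i + 1) (by omega) x hx
        _ = (ENNReal.ofReal (C * 2 ^ (lam / p) * r ^ ((lam - n) / p)) *
              (Mp f) ^ (1 / p)) * ∑' i : ℕ, q ^ (i + 1) := by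
            rw [← ENNReal.tsum_mul_left]
            exact tsum_congr fun i => by ring
        _ = K := by rw [ENNReal.tsum_geometric_add_one, hKdef, hGqdef]
    -- pointwise power bound
    have hpow : ∀ x ∈ ball x₀ r,
        ENNReal.ofReal (|T f x| ^ p) ≤
          2 ^ p * (ENNReal.ofReal (|T (g 0) x| ^ p) + K ^ p) := by
      intro x hx
      rw [← ENNReal.ofReal_rpow_of_nonneg (abs_nonneg _) hp0.le]
      calc (ENNReal.ofReal |T f x|) ^ p
          ≤ (ENNReal.ofReal |T (g 0) x| + K) ^ p :=
            ENNReal.rpow_le_rpow (hpt x hx) hp0.le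
        _ ≤ 2 ^ p * ((ENNReal.ofReal |T (g 0) x|) ^ p + K ^ p) :=
            ennreal_add_rpow_le hp0.le _ _
        _ = 2 ^ p * (ENNReal.ofReal (|T (g 0) x| ^ p) + K ^ p) := by
            rw [ENNReal.ofReal_rpow_of_nonneg (abs_nonneg _) hp0.le]
    -- integrate over the ball
    have hint : (∫⁻ x in ball x₀ r, ENNReal.ofReal (|T f x| ^ p)) ≤
        2 ^ p * ((∫⁻ x in ball x₀ r, ENNReal.ofReal (|T (g 0) x| ^ p)) +
          K ^ p * volume (ball x₀ r)) := by
      calc (∫⁻ x in ball x₀ r, ENNReal.ofReal (|T f x| ^ p))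
          ≤ ∫⁻ x in ball x₀ r,
              2 ^ p * (ENNReal.ofReal (|T (g 0) x| ^ p) + K ^ p) := by
            refine lintegral_mono_ae ?_
            filter_upwards [ae_restrict_mem measurableSet_ball] with x hx using hpow x hx
        _ = 2 ^ p * ∫⁻ x in ball x₀ r,
              (ENNReal.ofReal (|T (g 0) x| ^ p) + K ^ p) :=
            lintegral_const_mul' _ _ (ENNReal.rpow_ne_top_of_nonneg hp0.le ENNReal.ofNat_ne_top)
        _ = 2 ^ p * ((∫⁻ x in ball x₀ r, ENNReal.ofReal (|T (g 0) x| ^ p)) +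
              K ^ p * volume (ball x₀ r)) := by
            rw [lintegral_add_right _ measurable_const, setLIntegral_const]
    -- the local piece
    have hg0 : (∫⁻ x in ball x₀ r, ENNReal.ofReal (|T (g 0) x| ^ p))
        ≤ ENNReal.ofReal C * (ENNReal.ofReal ((2 * r) ^ lam) * Mp f) := by
      refine (setLIntegral_le_lintegral _ _).trans ((hTLp (g 0)).trans ?_)
      refine mul_le_mul_right ?_ _
      have hind : ∀ x, ENNReal.ofReal (|g 0 x| ^ p)
          = Set.indicator (ball x₀ (2 * r)) (fun y => ENNReal.ofReal (|f y| ^ p)) x := by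
        intro x
        rw [hg]
        dsimp only
        rw [if_pos rfl, Set.indicator_apply]
        by_cases hx : x ∈ ball x₀ (2 * r)
        · rw [if_pos hx, if_pos (mem_ball.1 hx)]
        · rw [if_neg hx, if_neg (fun h => hx (mem_ball.2 h))]
          simp [Real.zero_rpow hp0.ne']
      calc (∫⁻ x, ENNReal.ofReal (|g 0 x| ^ p))
          = ∫⁻ x in ball x₀ (2 * r), ENNReal.ofReal (|f x| ^ p) := by
            simp_rw [hind]
            exact lintegral_indicator measurableSet_ball _
        _ ≤ _ := hball f x₀ _ (by positivity)
    -- the constant piece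
    have hKp : K ^ p = ENNReal.ofReal ((C * 2 ^ (lam / p)) ^ p) *
        ENNReal.ofReal (r ^ (lam - n)) * Mp f * Gq ^ p := by
      rw [hKdef, ENNReal.mul_rpow_of_nonneg _ _ hp0.le,
        ENNReal.mul_rpow_of_nonneg _ _ hp0.le,
        ENNReal.ofReal_rpow_of_nonneg (by positivity) hp0.le,
        ← ENNReal.rpow_mul, one_div_mul_cancel hp0.ne', ENNReal.rpow_one,
        Real.mul_rpow (by positivity) (by positivity),
        ← Real.rpow_mul hr.le, div_mul_cancel₀ _ hp0.ne',
        ENNReal.ofReal_mul (by positivity)]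
    -- volume of the ball
    have hBvol : volume (ball x₀ r) = ENNReal.ofReal (r ^ (n : ℕ)) * V := by
      rw [hVdef, Measure.addHaar_ball_of_pos volume x₀ hr, finrank_euclideanSpace_fin]
    -- two real identities
    have hr1 : ENNReal.ofReal (r ^ (-lam)) * ENNReal.ofReal ((2 * r) ^ lam)
        = ENNReal.ofReal (2 ^ lam) := by
      rw [← ENNReal.ofReal_mul (by positivity), Real.mul_rpow (by norm_num) hr.le,
        show r ^ (-lam) * (2 ^ lam * r ^ lam) = 2 ^ lam * (r ^ (-lam) * r ^ lam) from by ring,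
        ← Real.rpow_add hr, neg_add_cancel, Real.rpow_zero, mul_one]
    have hr2 : ENNReal.ofReal (r ^ (-lam)) *
        (ENNReal.ofReal (r ^ (lam - n)) * ENNReal.ofReal (r ^ (n : ℕ))) = 1 := by
      rw [← Real.rpow_natCast r n, ← ENNReal.ofReal_mul (by positivity),
        ← ENNReal.ofReal_mul (by positivity), ← Real.rpow_add hr, ← Real.rpow_add hr,
        show -lam + (lam - n + n) = 0 from by ring, Real.rpow_zero, ENNReal.ofReal_one]
    -- put everything together
    calc ENNReal.ofReal (r ^ (-lam)) * ∫⁻ x in ball x₀ r, ENNReal.ofReal (|T f x| ^ p)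
        ≤ ENNReal.ofReal (r ^ (-lam)) * (2 ^ p *
            ((ENNReal.ofReal C * (ENNReal.ofReal ((2 * r) ^ lam) * Mp f)) +
              (ENNReal.ofReal ((C * 2 ^ (lam / p)) ^ p) * ENNReal.ofReal (r ^ (lam - n)) *
                Mp f * Gq ^ p) * (ENNReal.ofReal (r ^ (n : ℕ)) * V))) := by
          refine mul_le_mul_right (hint.trans ?_) _
          refine mul_le_mul_right (add_le_add hg0 ?_) _
          rw [hKp, hBvol]
      _ = D * Mp f := by
          rw [show ENNReal.ofReal (r ^ (-lam)) * (2 ^ p *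
              ((ENNReal.ofReal C * (ENNReal.ofReal ((2 * r) ^ lam) * Mp f)) +
                (ENNReal.ofReal ((C * 2 ^ (lam / p)) ^ p) * ENNReal.ofReal (r ^ (lam - n)) *
                  Mp f * Gq ^ p) * (ENNReal.ofReal (r ^ (n : ℕ)) * V)))
              = 2 ^ p * ((ENNReal.ofReal (r ^ (-lam)) * ENNReal.ofReal ((2 * r) ^ lam)) *
                  (ENNReal.ofReal C * Mp f)) +
                2 ^ p * ((ENNReal.ofReal (r ^ (-lam)) * (ENNReal.ofReal (r ^ (lam - n)) *
                  ENNReal.ofReal (r ^ (n : ℕ)))) *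
                  (ENNReal.ofReal ((C * 2 ^ (lam / p)) ^ p) * Mp f * Gq ^ p * V)) from by ring,
            hr1, hr2, one_mul, hDdef,
            ENNReal.ofReal_mul (by positivity : (0:ℝ) ≤ 2 ^ lam)]
          ring
  -- conclude
  have main : ∀ (x₀ : EuclideanSpace ℝ (Fin n)) (r : {r : ℝ // 0 < r}),
      (ENNReal.ofReal (r.1 ^ (-lam)) *
        ∫⁻ y in ball x₀ r.1, ENNReal.ofReal (|T f y| ^ p)) ^ (1 / p)
        ≤ ENNReal.ofReal ((max 1 D.toReal) ^ (1 / p)) * (Mp f) ^ (1 / p) := by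
    intro x₀ r
    calc (ENNReal.ofReal (r.1 ^ (-lam)) *
        ∫⁻ y in ball x₀ r.1, ENNReal.ofReal (|T f y| ^ p)) ^ (1 / p)
        ≤ (D * Mp f) ^ (1 / p) := ENNReal.rpow_le_rpow (key x₀ r.1 r.2) hip.le
      _ ≤ (ENNReal.ofReal (max 1 D.toReal) * Mp f) ^ (1 / p) :=
          ENNReal.rpow_le_rpow (mul_le_mul_left hDle _) hip.le
      _ = ENNReal.ofReal ((max 1 D.toReal) ^ (1 / p)) * (Mp f) ^ (1 / p) := by
          rw [ENNReal.mul_rpow_of_nonneg _ _ hip.le,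
            ENNReal.ofReal_rpow_of_nonneg (le_trans zero_le_one (le_max_left _ _)) hip.le]
  exact iSup_le fun x₀ => iSup_le fun r => main x₀ r
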